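/- arXiv:2008.06903 — 2 statements merged into one kernel-verified Lean document; each statement's English description precedes it below -/
import Mathlib

section
/- Let x⁰ ∈ Q and let (xⁿ)_{n≥0} ⊆ Q be such that xⁿ⁺¹ is a scheme update of xⁿ for every n ≥ 0, and assume the discrete energy E_N is bounded below on Q (there is B ∈ ℝ with E_N(x) ≥ B for all x ∈ Q). Then lim_{n→∞} ⟨c[xⁿ] ⊙ δⁿ, δⁿ⟩_E = 0, where δⁿ_i = (xⁿ⁺¹_i − xⁿ_i)/τ and (a ⊙ b)_i = a_i b_i. (Part of Theorem 4.4.) -/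
open Finset Filter

noncomputable section

/-- Forward difference onto cells: `(D_h l)_{i-1/2} = (l_i - l_{i-1})/h` (use index `i`, `1 ≤ i ≤ M`). -/
def DhOp (h : ℝ) (l : ℕ → ℝ) (i : ℕ) : ℝ := (l i - l (i - 1)) / h

/-- Difference of a cell function back onto nodes: `(d_h φ)_i = (φ_{i+1/2} - φ_{i-1/2})/h`;
a cell function `φ` is encoded by `φ i = φ_{i-1/2}`. -/
def dhOp (h : ℝ) (φ : ℕ → ℝ) (i : ℕ) : ℝ := (φ (i + 1) - φ i) / h

/-- Central difference `D̃_h` on nodes. -/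
def DtOp (M : ℕ) (h : ℝ) (l : ℕ → ℝ) (i : ℕ) : ℝ :=
  if i = 0 then (l 1 - l 0) / h
  else if i = M then (l M - l (M - 1)) / h
  else (l (i + 1) - l (i - 1)) / (2 * h)

/-- Node inner product `⟨l, g⟩_E`. -/
def ipE (M : ℕ) (h : ℝ) (l g : ℕ → ℝ) : ℝ :=
  h * (l 0 * g 0 / 2 + (∑ i ∈ Finset.Ioo 0 M, l i * g i) + l M * g M / 2)

/-- Cell inner product `⟨φ, ψ⟩_C`. -/
def ipC (M : ℕ) (h : ℝ) (φ ψ : ℕ → ℝ) : ℝ :=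
  h * ∑ i ∈ Finset.Icc 1 M, φ i * ψ i

/-- The admissible (ordered) set `Q`. -/
def inQ (M : ℕ) (X0 XM : ℝ) (l : ℕ → ℝ) : Prop :=
  l 0 = X0 ∧ l M = XM ∧ ∀ i, 1 ≤ i → i ≤ M → l (i - 1) < l i

/-- The closure `Q̄` of the admissible set. -/
def inQbar (M : ℕ) (X0 XM : ℝ) (l : ℕ → ℝ) : Prop :=
  l 0 = X0 ∧ l M = XM ∧ ∀ i, 1 ≤ i → i ≤ M → l (i - 1) ≤ l i

/-- `Ŝ[x]_i = ⟨K(x_i - y), u₀(Y)⟩_E` for a kernel `K` (e.g. `K = W_c'`);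
also used as `w[x]_i` when `K = W` itself. -/
def Shat (M : ℕ) (h : ℝ) (K : ℝ → ℝ) (u0 x : ℕ → ℝ) (i : ℕ) : ℝ :=
  ipE M h (fun j => K (x i - x j)) u0

/-- The cell function `G[x]_{i-1/2} = s·H'(s) - H(s)`, `s = u_{0,i-1/2}/(D_h x)_{i-1/2}`. -/
def Gcell (h : ℝ) (H : ℝ → ℝ) (u0half x : ℕ → ℝ) (i : ℕ) : ℝ :=
  u0half i / DhOp h x i * deriv H (u0half i / DhOp h x i) - H (u0half i / DhOp h x i)

/-- The mobility coefficient `c[x]_i = u_{0,i}² / ((D̃_h x)_i · f(u_{0,i}/(D̃_h x)_i))`. -/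
def cCoef (M : ℕ) (h : ℝ) (f : ℝ → ℝ) (u0 x : ℕ → ℝ) (i : ℕ) : ℝ :=
  u0 i ^ 2 / (DtOp M h x i * f (u0 i / DtOp M h x i))

/-- `xp` is a scheme update of `x`: the fully discrete convex-splitting scheme equations. -/
def SchemeUpdate (M : ℕ) (h τ : ℝ) (H f Vc Ve Wc We : ℝ → ℝ)
    (u0 u0half x xp : ℕ → ℝ) : Prop :=
  ∀ i, 1 ≤ i → i ≤ M - 1 →
    cCoef M h f u0 x i * (xp i - x i) / τ =
      -dhOp h (Gcell h H u0half xp) i - u0 i * deriv Vc (xp i)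
        + u0 i * deriv Ve (x i)
        - u0 i * Shat M h (deriv Wc) u0 xp i + u0 i * Shat M h (deriv We) u0 x i

/-- The discrete total energy `E_N`. -/
def EN (M : ℕ) (h : ℝ) (H V W : ℝ → ℝ) (u0 u0half x : ℕ → ℝ) : ℝ :=
  h * ∑ i ∈ Finset.Icc 1 M, H (u0half i / DhOp h x i) * DhOp h x i
    + ipE M h u0 (fun i => V (x i))
    + 1 / 2 * ipE M h u0 (fun i => Shat M h W u0 x i)

/-- The convex part `E_{N,c}` of the discrete total energy. -/
def ENc (M : ℕ) (h : ℝ) (H Vc Wc : ℝ → ℝ) (u0 u0half x : ℕ → ℝ) : ℝ :=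
  h * ∑ i ∈ Finset.Icc 1 M, H (u0half i / DhOp h x i) * DhOp h x i
    + ipE M h u0 (fun i => Vc (x i))
    + 1 / 2 * ipE M h u0 (fun i => Shat M h Wc u0 x i)

/-- The concave (subtracted convex) part `E_{N,e}` of the discrete total energy. -/
def ENe (M : ℕ) (h : ℝ) (Ve We : ℝ → ℝ) (u0 x : ℕ → ℝ) : ℝ :=
  ipE M h u0 (fun i => Ve (x i)) + 1 / 2 * ipE M h u0 (fun i => Shat M h We u0 x i)

/-- The convex functional `J` whose minimizer over `Q` is the scheme update of `xn`. -/
def Jfun (M : ℕ) (h τ : ℝ) (H f Vc Ve Wc We : ℝ → ℝ)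
    (u0 u0half xn z : ℕ → ℝ) : ℝ :=
  1 / (2 * τ) * ipE M h (fun i => cCoef M h f u0 xn i * (z i - xn i)) (fun i => z i - xn i)
    + h * ∑ i ∈ Finset.Icc 1 M, H (u0half i / DhOp h z i) * DhOp h z i
    + ipE M h u0 (fun i => Vc (z i))
    + 1 / 2 * ipE M h u0 (fun i => Shat M h Wc u0 z i)
    - ipE M h (fun i => u0 i * deriv Ve (xn i)) z
    - ipE M h (fun i => u0 i * Shat M h (deriv We) u0 xn i) z

/-!
Pairing the scheme equation with the displacement `y - z` of one step (which vanishes at both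
ends) gives the one-step energy inequality `E_N(y) + τ ⟨c[z] ⊙ δ, δ⟩_E ≤ E_N(z)`. Each energy
increment is bounded by a gradient inequality, taken at the new point for the convex parts treated
implicitly and at the old point for the concave parts treated explicitly: for the internal energy
through the convexity of the perspective `r ↦ H(u/r) r`, after a discrete integration by parts
that produces `d_h G`, and for the interaction energy after symmetrising with the odd kernels
`W_c'`, `W_e'`. Summing these inequalities, the nonnegative dissipations have partial sums at most
`(E_N(x⁰) - B) / τ`, so they are summable and tend to zero.
-/

open Topology

lemma Function.Even.deriv {f : ℝ → ℝ} (hf : Function.Even f) : Function.Odd (deriv f) := by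
  intro s
  have h := deriv_comp_neg (f := f) (x := -s)
  rw [show (fun x => f (-x)) = f from funext hf, neg_neg] at h
  linarith

lemma ConvexOn.deriv_mul_sub_le {S : Set ℝ} {F : ℝ → ℝ} (hF : ConvexOn ℝ S F) {a b : ℝ}
    (ha : a ∈ S) (hb : b ∈ S) (hd : DifferentiableAt ℝ F a) :
    deriv F a * (b - a) ≤ F b - F a := by
  rcases lt_trichotomy a b with hab | rfl | hab
  · have h := hF.deriv_le_slope ha hb hab hd
    rwa [slope_def_field, le_div_iff₀ (by linarith)] at h
  · simp
  · have h := hF.slope_le_deriv hb ha hab hd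
    rw [slope_def_field, div_le_iff₀ (by linarith)] at h
    linarith

lemma convex_splitting_sub_le {Fc Fe : ℝ → ℝ} (hc : ConvexOn ℝ Set.univ Fc)
    (he : ConvexOn ℝ Set.univ Fe) {a b : ℝ} (hca : DifferentiableAt ℝ Fc a)
    (heb : DifferentiableAt ℝ Fe b) :
    (Fc a - Fe a) - (Fc b - Fe b) ≤ (deriv Fc a - deriv Fe b) * (a - b) := by
  linear_combination hc.deriv_mul_sub_le trivial (Set.mem_univ b) hca
    + he.deriv_mul_sub_le trivial (Set.mem_univ a) heb

/-- Convexity of the perspective `r ↦ H (u / r) * r`, whose derivative in `r` is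
`-(s H'(s) - H(s))` at `s = u / r`. -/
lemma ConvexOn.perspective_sub_le {H : ℝ → ℝ} (hH : ConvexOn ℝ (Set.Ioi 0) H) {u r r' : ℝ}
    (hu : 0 < u) (hr : 0 < r) (hr' : 0 < r') (hd : DifferentiableAt ℝ H (u / r')) :
    H (u / r') * r' - H (u / r) * r ≤ -(u / r' * deriv H (u / r') - H (u / r')) * (r' - r) := by
  have key := hH.deriv_mul_sub_le (div_pos hu hr') (div_pos hu hr) hd
  have expand : H (u / r') * r' - H (u / r) * r
        + (u / r' * deriv H (u / r') - H (u / r')) * (r' - r)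
      = r * ((H (u / r') - H (u / r)) + deriv H (u / r') * (u / r - u / r')) := by
    field_simp
    ring
  linear_combination expand + mul_le_mul_of_nonneg_left key hr.le

lemma sum_sum_mul_sub_of_antisymm {ι : Type*} (I : Finset ι) (m d : ι → ℝ) (K : ι → ι → ℝ)
    (hK : ∀ i j, K j i = -K i j) :
    ∑ i ∈ I, ∑ j ∈ I, m i * m j * K i j * (d i - d j)
      = 2 * ∑ i ∈ I, m i * d i * ∑ j ∈ I, m j * K i j := by
  have swap : ∑ i ∈ I, ∑ j ∈ I, m i * m j * K i j * d j
      = -∑ i ∈ I, ∑ j ∈ I, m i * m j * K i j * d i := by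
    rw [Finset.sum_comm, ← Finset.sum_neg_distrib]
    refine Finset.sum_congr rfl fun i _ => ?_
    rw [← Finset.sum_neg_distrib]
    refine Finset.sum_congr rfl fun j _ => ?_
    rw [hK]
    ring
  simp only [mul_sub, Finset.sum_sub_distrib, swap, sub_neg_eq_add, ← two_mul]
  congr 1
  refine Finset.sum_congr rfl fun i _ => ?_
  rw [Finset.mul_sum]
  exact Finset.sum_congr rfl fun j _ => by ring

lemma sum_Icc_mul_sub_add_sum_Ioo {M : ℕ} (hM : 1 ≤ M) (φ d : ℕ → ℝ) :
    ∑ i ∈ Icc 1 M, φ i * (d i - d (i - 1)) + ∑ i ∈ Ioo 0 M, (φ (i + 1) - φ i) * d i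
      = φ M * d M - φ 1 * d 0 := by
  rw [← Finset.Ico_add_one_left_eq_Ioo, zero_add]
  induction M, hM using Nat.le_induction with
  | base => simp [mul_sub]
  | succ n hn ih =>
    rw [Finset.sum_Icc_succ_top (by omega), Finset.sum_Ico_succ_top hn, Nat.add_sub_cancel]
    linear_combination ih

lemma tendsto_zero_of_add_mul_le {E a : ℕ → ℝ} {τ B : ℝ} (hτ : 0 < τ) (ha : ∀ n, 0 ≤ a n)
    (hE : ∀ n, E (n + 1) + τ * a n ≤ E n) (hB : ∀ n, B ≤ E n) :
    Tendsto a atTop (𝓝 0) := by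
  have telescope : ∀ n, E n + τ * ∑ k ∈ range n, a k ≤ E 0 := by
    intro n
    induction n with
    | zero => simp
    | succ n ih => rw [Finset.sum_range_succ]; linarith [hE n]
  refine (summable_of_sum_range_le (c := (E 0 - B) / τ) ha fun n => ?_).tendsto_atTop_zero
  rw [le_div_iff₀ hτ]
  linarith [telescope n, hB n]

section Grid

variable {M : ℕ} {h : ℝ}

def trapWeight (M : ℕ) (h : ℝ) (i : ℕ) : ℝ := if i = 0 ∨ i = M then h / 2 else h

lemma trapWeight_nonneg (hh : 0 ≤ h) (i : ℕ) : 0 ≤ trapWeight M h i := by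
  unfold trapWeight; split <;> linarith

lemma ipE_eq_sum_trapWeight (hM : 0 < M) (l g : ℕ → ℝ) :
    ipE M h l g = ∑ i ∈ Icc 0 M, trapWeight M h i * (l i * g i) := by
  have hIcc : Icc 0 M = insert 0 (insert M (Ioo 0 M)) := by
    ext i; simp only [mem_Icc, mem_Ioo, mem_insert]; omega
  rw [hIcc, sum_insert (by simp; omega), sum_insert (by simp),
    sum_congr rfl fun i hi => by rw [trapWeight, if_neg (by simp at hi; omega)], ← mul_sum, ipE]
  simp only [trapWeight, true_or, or_true, if_true]
  ring

lemma ipE_eq_of_boundary_zero (l : ℕ → ℝ) {g : ℕ → ℝ} (h0 : g 0 = 0) (hM : g M = 0) :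
    ipE M h l g = h * ∑ i ∈ Ioo 0 M, l i * g i := by
  simp [ipE, h0, hM]

lemma ipC_DhOp_eq_neg_ipE_dhOp (hh : h ≠ 0) (φ : ℕ → ℝ) {d : ℕ → ℝ} (h0 : d 0 = 0)
    (hM : d M = 0) : ipC M h φ (DhOp h d) = -ipE M h (dhOp h φ) d := by
  rcases Nat.eq_zero_or_pos M with rfl | hMpos
  · simp [ipC, ipE, h0]
  have parts := sum_Icc_mul_sub_add_sum_Ioo hMpos φ d
  rw [h0, hM, mul_zero, mul_zero, sub_zero, ← eq_neg_iff_add_eq_zero] at parts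
  rw [ipE_eq_of_boundary_zero _ h0 hM, ipC]
  simp only [DhOp, dhOp, mul_div_assoc', div_mul_eq_mul_div, ← sum_div, parts]
  field_simp

lemma Shat_eq_sum (hM : 0 < M) (K : ℝ → ℝ) (u p : ℕ → ℝ) (i : ℕ) :
    Shat M h K u p i = ∑ j ∈ Icc 0 M, trapWeight M h j * u j * K (p i - p j) := by
  rw [Shat, ipE_eq_sum_trapWeight hM]
  exact sum_congr rfl fun j _ => by ring

lemma ipE_Shat_eq_sum_sum (hM : 0 < M) (K : ℝ → ℝ) (u p : ℕ → ℝ) :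
    ipE M h u (fun i => Shat M h K u p i)
      = ∑ i ∈ Icc 0 M, ∑ j ∈ Icc 0 M,
          trapWeight M h i * u i * (trapWeight M h j * u j) * K (p i - p j) := by
  rw [ipE_eq_sum_trapWeight hM]
  refine sum_congr rfl fun i _ => ?_
  rw [Shat_eq_sum hM, mul_sum, mul_sum]
  exact sum_congr rfl fun j _ => by ring

end Grid

section Energy

variable {M : ℕ} {h : ℝ}

lemma inQ.DhOp_pos {X0 XM : ℝ} {x : ℕ → ℝ} (hx : inQ M X0 XM x) (hh : 0 < h) {i : ℕ}
    (hi₁ : 1 ≤ i) (hiM : i ≤ M) : 0 < DhOp h x i :=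
  div_pos (sub_pos.mpr (hx.2.2 i hi₁ hiM)) hh

lemma inQ.DtOp_pos {X0 XM : ℝ} {x : ℕ → ℝ} (hx : inQ M X0 XM x) (hh : 0 < h) {i : ℕ}
    (hi₀ : 0 < i) (hiM : i < M) : 0 < DtOp M h x i := by
  have left := hx.2.2 i hi₀ hiM.le
  have right := hx.2.2 (i + 1) (by omega) hiM
  rw [Nat.add_sub_cancel] at right
  rw [DtOp, if_neg hi₀.ne', if_neg hiM.ne]
  exact div_pos (by linarith) (by linarith)

lemma internal_energy_sub_le (hh : 0 < h) {H : ℝ → ℝ} (hH : ConvexOn ℝ (Set.Ioi 0) H)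
    (hHd : ∀ s, 0 < s → DifferentiableAt ℝ H s) {uh : ℕ → ℝ}
    (hu : ∀ i, 1 ≤ i → i ≤ M → 0 < uh i) {y z : ℕ → ℝ}
    (hy : ∀ i, 1 ≤ i → i ≤ M → 0 < DhOp h y i) (hz : ∀ i, 1 ≤ i → i ≤ M → 0 < DhOp h z i)
    (h0 : y 0 - z 0 = 0) (hM : y M - z M = 0) :
    h * ∑ i ∈ Icc 1 M, H (uh i / DhOp h y i) * DhOp h y i
        - h * ∑ i ∈ Icc 1 M, H (uh i / DhOp h z i) * DhOp h z i
      ≤ ipE M h (dhOp h (Gcell h H uh y)) (fun i => y i - z i) := by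
  have termwise : ∀ i ∈ Icc 1 M,
      H (uh i / DhOp h y i) * DhOp h y i - H (uh i / DhOp h z i) * DhOp h z i
        ≤ -(Gcell h H uh y i * DhOp h (fun i => y i - z i) i) := by
    intro i hi
    obtain ⟨hi₁, hiM⟩ := mem_Icc.mp hi
    have hDd : DhOp h (fun i => y i - z i) i = DhOp h y i - DhOp h z i := by
      simp only [DhOp]; ring
    rw [hDd, neg_mul_eq_neg_mul]
    exact hH.perspective_sub_le (hu i hi₁ hiM) (hz i hi₁ hiM) (hy i hi₁ hiM)
      (hHd _ (div_pos (hu i hi₁ hiM) (hy i hi₁ hiM)))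
  calc _ = h * ∑ i ∈ Icc 1 M,
          (H (uh i / DhOp h y i) * DhOp h y i - H (uh i / DhOp h z i) * DhOp h z i) := by
        rw [sum_sub_distrib, mul_sub]
    _ ≤ h * ∑ i ∈ Icc 1 M, -(Gcell h H uh y i * DhOp h (fun i => y i - z i) i) := by
        gcongr with i hi
        exact termwise i hi
    _ = -ipC M h (Gcell h H uh y) (DhOp h fun i => y i - z i) := by
        rw [ipC, sum_neg_distrib, mul_neg]
    _ = _ := by rw [ipC_DhOp_eq_neg_ipE_dhOp hh.ne' _ h0 hM, neg_neg]

lemma ipE_convex_splitting_sub_le (hM : 0 < M) (hh : 0 ≤ h) {Fc Fe : ℝ → ℝ}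
    (hc : ConvexOn ℝ Set.univ Fc) (he : ConvexOn ℝ Set.univ Fe)
    (hcd : Differentiable ℝ Fc) (hed : Differentiable ℝ Fe) {u : ℕ → ℝ}
    (hu : ∀ i ≤ M, 0 ≤ u i) (y z : ℕ → ℝ) :
    ipE M h u (fun i => Fc (y i) - Fe (y i)) - ipE M h u (fun i => Fc (z i) - Fe (z i))
      ≤ ipE M h (fun i => u i * (deriv Fc (y i) - deriv Fe (z i))) (fun i => y i - z i) := by
  simp only [ipE_eq_sum_trapWeight hM, ← sum_sub_distrib]
  refine sum_le_sum fun i hi => ?_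
  have hw : 0 ≤ trapWeight M h i * u i :=
    mul_nonneg (trapWeight_nonneg hh i) (hu i (mem_Icc.mp hi).2)
  linear_combination
    mul_le_mul_of_nonneg_left (convex_splitting_sub_le hc he (hcd (y i)) (hed (z i))) hw

lemma interaction_energy_sub_le (hM : 0 < M) (hh : 0 ≤ h) {Wc We : ℝ → ℝ}
    (hc : ConvexOn ℝ Set.univ Wc) (he : ConvexOn ℝ Set.univ We)
    (hcd : Differentiable ℝ Wc) (hed : Differentiable ℝ We)
    (hc_even : Function.Even Wc) (he_even : Function.Even We) {u : ℕ → ℝ}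
    (hu : ∀ i ≤ M, 0 ≤ u i) (y z : ℕ → ℝ) :
    1 / 2 * ipE M h u (fun i => Shat M h (fun s => Wc s - We s) u y i)
        - 1 / 2 * ipE M h u (fun i => Shat M h (fun s => Wc s - We s) u z i)
      ≤ ipE M h (fun i => u i * (Shat M h (deriv Wc) u y i - Shat M h (deriv We) u z i))
          (fun i => y i - z i) := by
  set m : ℕ → ℝ := fun i => trapWeight M h i * u i with hm
  set K : ℕ → ℕ → ℝ := fun i j => deriv Wc (y i - y j) - deriv We (z i - z j) with hK
  have K_antisymm : ∀ i j, K j i = -K i j := by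
    intro i j
    simp only [hK]
    rw [← neg_sub (y i), ← neg_sub (z i), hc_even.deriv, he_even.deriv]
    ring
  have double_sum : ipE M h u (fun i => Shat M h (fun s => Wc s - We s) u y i)
        - ipE M h u (fun i => Shat M h (fun s => Wc s - We s) u z i)
      ≤ ∑ i ∈ Icc 0 M, ∑ j ∈ Icc 0 M, m i * m j * K i j * ((y i - z i) - (y j - z j)) := by
    rw [ipE_Shat_eq_sum_sum hM, ipE_Shat_eq_sum_sum hM, ← sum_sub_distrib]
    refine sum_le_sum fun i hi => ?_
    rw [← sum_sub_distrib]
    refine sum_le_sum fun j hj => ?_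
    have hmm : 0 ≤ m i * m j :=
      mul_nonneg (mul_nonneg (trapWeight_nonneg hh i) (hu i (mem_Icc.mp hi).2))
        (mul_nonneg (trapWeight_nonneg hh j) (hu j (mem_Icc.mp hj).2))
    linear_combination mul_le_mul_of_nonneg_left
      (convex_splitting_sub_le hc he (hcd (y i - y j)) (hed (z i - z j))) hmm
  have pairing : ipE M h (fun i => u i * (Shat M h (deriv Wc) u y i - Shat M h (deriv We) u z i))
        (fun i => y i - z i)
      = ∑ i ∈ Icc 0 M, m i * (y i - z i) * ∑ j ∈ Icc 0 M, m j * K i j := by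
    rw [ipE_eq_sum_trapWeight hM]
    refine sum_congr rfl fun i _ => ?_
    rw [Shat_eq_sum hM, Shat_eq_sum hM, ← sum_sub_distrib]
    simp only [hm, hK, mul_sub]
    ring
  rw [pairing]
  linarith [sum_sum_mul_sub_of_antisymm (Icc 0 M) m (fun i => y i - z i) K K_antisymm]

lemma SchemeUpdate.ipE_residual_eq {τ : ℝ} {H f Vc Ve Wc We : ℝ → ℝ} {u0 u0half z y : ℕ → ℝ}
    (hupd : SchemeUpdate M h τ H f Vc Ve Wc We u0 u0half z y) (hτ : τ ≠ 0)
    (h0 : y 0 - z 0 = 0) (hM : y M - z M = 0) :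
    ipE M h (dhOp h (Gcell h H u0half y)) (fun i => y i - z i)
        + ipE M h (fun i => u0 i * (deriv Vc (y i) - deriv Ve (z i))) (fun i => y i - z i)
        + ipE M h (fun i => u0 i * (Shat M h (deriv Wc) u0 y i - Shat M h (deriv We) u0 z i))
            (fun i => y i - z i)
      = -τ * ipE M h (fun i => cCoef M h f u0 z i * ((y i - z i) / τ))
          (fun i => (y i - z i) / τ) := by
  rw [ipE_eq_of_boundary_zero _ h0 hM, ipE_eq_of_boundary_zero _ h0 hM,
    ipE_eq_of_boundary_zero _ h0 hM,
    ipE_eq_of_boundary_zero _ (by rw [h0, zero_div]) (by rw [hM, zero_div]),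
    ← mul_add, ← mul_add, ← sum_add_distrib, ← sum_add_distrib, mul_left_comm (-τ) h]
  congr 1
  rw [mul_sum]
  refine sum_congr rfl fun i hi => ?_
  have e := hupd i (mem_Ioo.mp hi).1 (by have := (mem_Ioo.mp hi).2; omega)
  have cancel : τ * ((y i - z i) / τ) = y i - z i := mul_div_cancel₀ _ hτ
  linear_combination (y i - z i) * e + cCoef M h f u0 z i * (y i - z i) / τ * cancel

lemma inQ.cCoef_pos {X0 XM : ℝ} {x : ℕ → ℝ} (hx : inQ M X0 XM x) (hh : 0 < h) {f : ℝ → ℝ}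
    (hf : ∀ s, 0 < s → 0 < f s) {u0 : ℕ → ℝ} {i : ℕ} (hu : 0 < u0 i) (hi₀ : 0 < i)
    (hiM : i < M) : 0 < cCoef M h f u0 x i := by
  have hD := hx.DtOp_pos hh hi₀ hiM
  exact div_pos (pow_pos hu 2) (mul_pos hD (hf _ (div_pos hu hD)))

lemma inQ.ipE_cCoef_mul_nonneg {X0 XM : ℝ} {x : ℕ → ℝ} (hx : inQ M X0 XM x) (hh : 0 < h)
    {f : ℝ → ℝ} (hf : ∀ s, 0 < s → 0 < f s) {u0 : ℕ → ℝ} (hu0 : ∀ i ≤ M, 0 < u0 i)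
    {δ : ℕ → ℝ} (h0 : δ 0 = 0) (hM : δ M = 0) :
    0 ≤ ipE M h (fun i => cCoef M h f u0 x i * δ i) δ := by
  rw [ipE_eq_of_boundary_zero _ h0 hM]
  refine mul_nonneg hh.le (sum_nonneg fun i hi => ?_)
  obtain ⟨hi₀, hiM⟩ := mem_Ioo.mp hi
  rw [mul_assoc]
  exact mul_nonneg (hx.cCoef_pos hh hf (hu0 i hiM.le) hi₀ hiM).le (mul_self_nonneg _)

theorem SchemeUpdate.EN_add_mul_dissipation_le (hM : 0 < M) (hh : 0 < h) {τ : ℝ} (hτ : τ ≠ 0)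
    {H f Vc Ve Wc We : ℝ → ℝ}
    (hH : ConvexOn ℝ (Set.Ioi 0) H) (hHd : ∀ s, 0 < s → DifferentiableAt ℝ H s)
    (hVc : ConvexOn ℝ Set.univ Vc) (hVcd : Differentiable ℝ Vc)
    (hVe : ConvexOn ℝ Set.univ Ve) (hVed : Differentiable ℝ Ve)
    (hWc : ConvexOn ℝ Set.univ Wc) (hWcd : Differentiable ℝ Wc)
    (hWe : ConvexOn ℝ Set.univ We) (hWed : Differentiable ℝ We)
    (hWc_even : Function.Even Wc) (hWe_even : Function.Even We)
    {u0 u0half : ℕ → ℝ} (hu0 : ∀ i ≤ M, 0 ≤ u0 i)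
    (hu0half : ∀ i, 1 ≤ i → i ≤ M → 0 < u0half i)
    {X0 XM : ℝ} {z y : ℕ → ℝ} (hz : inQ M X0 XM z) (hy : inQ M X0 XM y)
    (hupd : SchemeUpdate M h τ H f Vc Ve Wc We u0 u0half z y) :
    EN M h H (fun s => Vc s - Ve s) (fun s => Wc s - We s) u0 u0half y
        + τ * ipE M h (fun i => cCoef M h f u0 z i * ((y i - z i) / τ))
          (fun i => (y i - z i) / τ)
      ≤ EN M h H (fun s => Vc s - Ve s) (fun s => Wc s - We s) u0 u0half z := by
  have h0 : y 0 - z 0 = 0 := by rw [hy.1, hz.1, sub_self]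
  have hM' : y M - z M = 0 := by rw [hy.2.1, hz.2.1, sub_self]
  have internal := internal_energy_sub_le hh hH hHd hu0half
    (fun _ => hy.DhOp_pos hh) (fun _ => hz.DhOp_pos hh) h0 hM'
  have potential := ipE_convex_splitting_sub_le hM hh.le hVc hVe hVcd hVed hu0 y z
  have interaction :=
    interaction_energy_sub_le hM hh.le hWc hWe hWcd hWed hWc_even hWe_even hu0 y z
  have residual := hupd.ipE_residual_eq hτ h0 hM'
  unfold EN
  linarith

end Energy

/-- Part of **Theorem 4.4**: if the discrete energy is bounded below on `Q`, then the
discrete dissipation terms tend to zero along the scheme iterates. -/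
theorem dissipation_tendsto_zero
    (M : ℕ) (hM : 2 ≤ M) (X0 XM : ℝ) (hX : X0 < XM)
    (h : ℝ) (hh : h = (XM - X0) / (M : ℝ)) (τ : ℝ) (hτ : 0 < τ)
    (H f Vc Ve Wc We : ℝ → ℝ)
    (hHconv : ConvexOn ℝ (Set.Ioi 0) H) (hHreg : ContDiffOn ℝ 1 H (Set.Ioi 0))
    (hf : ∀ s : ℝ, 0 < s → 0 < f s)
    (hVcconv : ConvexOn ℝ Set.univ Vc) (hVcreg : ContDiff ℝ 1 Vc)
    (hVeconv : ConvexOn ℝ Set.univ Ve) (hVereg : ContDiff ℝ 1 Ve)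
    (hWcconv : ConvexOn ℝ Set.univ Wc) (hWcreg : ContDiff ℝ 1 Wc)
    (hWeconv : ConvexOn ℝ Set.univ We) (hWereg : ContDiff ℝ 1 We)
    (hWceven : ∀ s : ℝ, Wc (-s) = Wc s) (hWeeven : ∀ s : ℝ, We (-s) = We s)
    (u0 u0half : ℕ → ℝ)
    (hu0 : ∀ i ≤ M, 0 < u0 i)
    (hu0half : ∀ i, 1 ≤ i → i ≤ M → 0 < u0half i)
    (B : ℝ)
    (hB : ∀ z : ℕ → ℝ, inQ M X0 XM z →
      B ≤ EN M h H (fun s => Vc s - Ve s) (fun s => Wc s - We s) u0 u0half z)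
    (x : ℕ → ℕ → ℝ) (hxQ : ∀ n, inQ M X0 XM (x n))
    (hupd : ∀ n, SchemeUpdate M h τ H f Vc Ve Wc We u0 u0half (x n) (x (n + 1))) :
    Tendsto (fun n =>
        ipE M h (fun i => cCoef M h f u0 (x n) i * ((x (n + 1) i - x n i) / τ))
          (fun i => (x (n + 1) i - x n i) / τ))
      atTop (nhds 0) := by
  have hM₀ : 0 < M := by omega
  have hh₀ : 0 < h := hh ▸ div_pos (sub_pos.mpr hX) (Nat.cast_pos.mpr hM₀)
  have hHd : ∀ s, 0 < s → DifferentiableAt ℝ H s := fun s hs =>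
    (hHreg.differentiableOn one_ne_zero s hs).differentiableAt (Ioi_mem_nhds hs)
  refine tendsto_zero_of_add_mul_le hτ (fun n => ?_) (fun n => ?_) (fun n => hB _ (hxQ n))
  · exact (hxQ n).ipE_cCoef_mul_nonneg hh₀ hf hu0
      (by rw [(hxQ _).1, (hxQ n).1, sub_self, zero_div])
      (by rw [(hxQ _).2.1, (hxQ n).2.1, sub_self, zero_div])
  · exact (hupd n).EN_add_mul_dissipation_le hM₀ hh₀ hτ.ne' hHconv hHd
      hVcconv (hVcreg.differentiable one_ne_zero) hVeconv (hVereg.differentiable one_ne_zero)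
      hWcconv (hWcreg.differentiable one_ne_zero) hWeconv (hWereg.differentiable one_ne_zero)
      hWceven hWeeven (fun i hi => (hu0 i hi).le) hu0half (hxQ n) (hxQ (n + 1))
end
end

section
/- For every xⁿ ∈ Q, the functional J is convex on the convex set Q: for all z, w ∈ Q and θ ∈ [0,1], J(θz + (1−θ)w) ≤ θ·J(z) + (1−θ)·J(w); moreover J is strictly convex on Q, i.e. the inequality is strict whenever z ≠ w and θ ∈ (0,1). -/
open Finset Filter

noncomputable section

/-!
Apart from the quadratic term, `J` is a sum of convex functions on `Q`: the entropy term is a sum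
of perspectives `s ↦ s · H(u / s)` of the convex `H`, composed with the linear maps
`z ↦ (D_h z)_{i-1/2}`; the potential and interaction terms are nonnegative combinations of convex
functions of `z_i` and of `z_i - z_j`; the last two terms are linear. The quadratic term is exact: it contributes
`θ (1 - θ) / (2τ) ⟨c ⊙ (z - w), z - w⟩_E` to the convexity gap, and this is positive when `z ≠ w`
since `c > 0` and two points of `Q` share their boundary values, so they differ at an interior node.
-/

theorem convexOn_finsetSum {𝕜 E β ι : Type*} [Semiring 𝕜] [PartialOrder 𝕜] [AddCommMonoid E]
    [AddCommMonoid β] [PartialOrder β] [IsOrderedAddMonoid β] [SMul 𝕜 E] [Module 𝕜 β] {s : Set E}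
    (hs : Convex 𝕜 s) (t : Finset ι) {F : ι → E → β} (hF : ∀ i ∈ t, ConvexOn 𝕜 s (F i)) :
    ConvexOn 𝕜 s (fun z => ∑ i ∈ t, F i z) := by
  classical
  induction t using Finset.induction_on with
  | empty => simpa using convexOn_const (0 : β) hs
  | insert a t ha ih =>
    simp only [Finset.sum_insert ha]
    exact (hF a (mem_insert_self a t)).add (ih fun i hi => hF i (mem_insert_of_mem hi))

theorem ConvexOn.perspective_const {H : ℝ → ℝ} (hH : ConvexOn ℝ (Set.Ioi 0) H) {u : ℝ}
    (hu : 0 < u) : ConvexOn ℝ (Set.Ioi 0) (fun s => H (u / s) * s) := by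
  refine ⟨convex_Ioi 0, fun s (hs : 0 < s) t (ht : 0 < t) a b ha hb hab => ?_⟩
  simp only [smul_eq_mul]
  have hp : 0 < a * s + b * t := by
    rcases ha.eq_or_lt with rfl | ha
    · simp only [zero_add] at hab; subst hab; simpa using ht
    · positivity
  set p := a * s + b * t
  have hcomb : (a * s / p) • (u / s) + (b * t / p) • (u / t) = u / p := by
    simp only [smul_eq_mul]; field_simp; linear_combination hab
  have hJensen := hH.2 (div_pos hu hs) (div_pos hu ht) (show 0 ≤ a * s / p by positivity)
    (show 0 ≤ b * t / p by positivity) (by rw [← add_div, div_self hp.ne'])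
  rw [hcomb, smul_eq_mul, smul_eq_mul] at hJensen
  calc H (u / p) * p ≤ (a * s / p * H (u / s) + b * t / p * H (u / t)) * p := by gcongr
    _ = a * (H (u / s) * s) + b * (H (u / t) * t) := by field_simp

section ipE

variable {M : ℕ} {h : ℝ}

theorem ipE_comm (l g : ℕ → ℝ) : ipE M h l g = ipE M h g l := by
  simp only [ipE, mul_comm (l _) (g _)]

theorem ipE_add_right (l g g' : ℕ → ℝ) :
    ipE M h l (fun i => g i + g' i) = ipE M h l g + ipE M h l g' := by
  simp only [ipE, mul_add, sum_add_distrib]; ring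

theorem ipE_smul_right (l g : ℕ → ℝ) (c : ℝ) :
    ipE M h l (fun i => c * g i) = c * ipE M h l g := by
  simp only [ipE, mul_left_comm (l _) c, ← mul_sum]; ring

theorem ipE_le_ipE (hh : 0 ≤ h) {l g l' g' : ℕ → ℝ} (hle : ∀ i ≤ M, l i * g i ≤ l' i * g' i) :
    ipE M h l g ≤ ipE M h l' g' := by
  unfold ipE
  have hsum := sum_le_sum fun i (hi : i ∈ Ioo 0 M) => hle i (mem_Ioo.1 hi).2.le
  have h0 := hle 0 (Nat.zero_le M)
  have hM := hle M le_rfl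
  exact mul_le_mul_of_nonneg_left (by linarith) hh

theorem convexOn_ipE {E : Type*} [AddCommMonoid E] [SMul ℝ E] {s : Set E} (hh : 0 ≤ h)
    {l : ℕ → ℝ} (hl : ∀ i ≤ M, 0 ≤ l i) {F : ℕ → E → ℝ} (hF : ∀ i ≤ M, ConvexOn ℝ s (F i)) :
    ConvexOn ℝ s (fun z => ipE M h l (fun i => F i z)) := by
  refine ⟨(hF 0 (Nat.zero_le M)).1, fun z hz w hw a b ha hb hab => ?_⟩
  calc ipE M h l (fun i => F i (a • z + b • w))
      ≤ ipE M h l (fun i => a * F i z + b * F i w) :=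
        ipE_le_ipE hh fun i hi => mul_le_mul_of_nonneg_left ((hF i hi).2 hz hw ha hb hab) (hl i hi)
    _ = a • ipE M h l (fun i => F i z) + b • ipE M h l (fun i => F i w) := by
        rw [ipE_add_right, ipE_smul_right, ipE_smul_right]; rfl

theorem concaveOn_ipE_right {s : Set (ℕ → ℝ)} (hs : Convex ℝ s) (l : ℕ → ℝ) :
    ConcaveOn ℝ s (ipE M h l) :=
  ⟨hs, fun z _ w _ a b _ _ _ => by
    rw [show a • z + b • w = fun i => a * z i + b * w i from rfl, ipE_add_right,
      ipE_smul_right, ipE_smul_right]; rfl⟩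

theorem ipE_weighted_sq_convexComb (c x z w : ℕ → ℝ) (θ : ℝ) :
    ipE M h (fun i => c i * (θ * z i + (1 - θ) * w i - x i))
        (fun i => θ * z i + (1 - θ) * w i - x i)
      + θ * (1 - θ) * ipE M h (fun i => c i * (z i - w i)) (fun i => z i - w i)
      = θ * ipE M h (fun i => c i * (z i - x i)) (fun i => z i - x i)
        + (1 - θ) * ipE M h (fun i => c i * (w i - x i)) (fun i => w i - x i) := by
  unfold ipE
  have hsum : ∑ i ∈ Ioo 0 M, c i * (θ * z i + (1 - θ) * w i - x i) * (θ * z i + (1 - θ) * w i - x i)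
        + θ * (1 - θ) * ∑ i ∈ Ioo 0 M, c i * (z i - w i) * (z i - w i)
      = θ * ∑ i ∈ Ioo 0 M, c i * (z i - x i) * (z i - x i)
        + (1 - θ) * ∑ i ∈ Ioo 0 M, c i * (w i - x i) * (w i - x i) := by
    simp only [mul_sum, ← sum_add_distrib]
    exact sum_congr rfl fun i _ => by ring
  linear_combination h * hsum

theorem ipE_weighted_sq_nonneg (hh : 0 ≤ h) {c : ℕ → ℝ} (hc : ∀ i ≤ M, 0 ≤ c i) (d : ℕ → ℝ) :
    0 ≤ ipE M h (fun i => c i * d i) d := by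
  simpa [ipE] using ipE_le_ipE (M := M) hh (l := 0) (g := 0) (l' := fun i => c i * d i) (g' := d)
    fun i hi => by simpa [mul_assoc] using mul_nonneg (hc i hi) (mul_self_nonneg (d i))

theorem ipE_weighted_sq_pos (hh : 0 < h) {c : ℕ → ℝ} (hc : ∀ i ≤ M, 0 < c i) {d : ℕ → ℝ} {k : ℕ}
    (hk : k ∈ Ioo 0 M) (hdk : d k ≠ 0) : 0 < ipE M h (fun i => c i * d i) d := by
  have hnn : ∀ i ≤ M, 0 ≤ c i * d i * d i := fun i hi => by
    simpa [mul_assoc] using mul_nonneg (hc i hi).le (mul_self_nonneg (d i))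
  have hsum : 0 < ∑ i ∈ Ioo 0 M, c i * d i * d i :=
    sum_pos' (fun i hi => hnn i (mem_Ioo.1 hi).2.le)
      ⟨k, hk, by simpa [mul_assoc] using mul_pos (hc k (mem_Ioo.1 hk).2.le) (mul_self_pos.2 hdk)⟩
  have h0 := hnn 0 (Nat.zero_le M)
  have hM := hnn M le_rfl
  unfold ipE
  positivity

end ipE

def DhOpLinear (h : ℝ) (i : ℕ) : (ℕ → ℝ) →ₗ[ℝ] ℝ where
  toFun z := DhOp h z i
  map_add' z w := by simp only [DhOp, Pi.add_apply]; ring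
  map_smul' c z := by simp only [DhOp, Pi.smul_apply, smul_eq_mul, RingHom.id_apply]; ring

section inQ

variable {M : ℕ} {X0 XM h : ℝ} {x z w : ℕ → ℝ}

theorem convex_inQ (M : ℕ) (X0 XM : ℝ) : Convex ℝ {l : ℕ → ℝ | inQ M X0 XM l} := by
  rintro z ⟨hz0, hzM, hz⟩ w ⟨hw0, hwM, hw⟩ a b ha hb hab
  refine ⟨?_, ?_, fun i hi1 hiM => ?_⟩
  · simp only [Pi.add_apply, Pi.smul_apply, smul_eq_mul, hz0, hw0]
    linear_combination X0 * hab
  · simp only [Pi.add_apply, Pi.smul_apply, smul_eq_mul, hzM, hwM]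
    linear_combination XM * hab
  · simp only [Pi.add_apply, Pi.smul_apply, smul_eq_mul]
    rcases ha.eq_or_lt with rfl | ha
    · obtain rfl : b = 1 := by linarith
      simpa using hw i hi1 hiM
    · exact add_lt_add_of_lt_of_le (mul_lt_mul_of_pos_left (hz i hi1 hiM) ha)
        (mul_le_mul_of_nonneg_left (hw i hi1 hiM).le hb)

theorem mem_Ioo_of_inQ_of_ne (hz : inQ M X0 XM z) (hw : inQ M X0 XM w) {i : ℕ} (hiM : i ≤ M)
    (hne : z i ≠ w i) : i ∈ Ioo 0 M := by
  refine mem_Ioo.2 ⟨Nat.pos_of_ne_zero ?_, hiM.lt_of_ne ?_⟩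
  · rintro rfl; exact hne (hz.1.trans hw.1.symm)
  · rintro rfl; exact hne (hz.2.1.trans hw.2.1.symm)

theorem DhOp_pos_of_inQ (hh : 0 < h) (hx : inQ M X0 XM x) {i : ℕ} (hi1 : 1 ≤ i) (hiM : i ≤ M) :
    0 < DhOp h x i :=
  div_pos (sub_pos.2 (hx.2.2 i hi1 hiM)) hh

theorem DtOp_pos_of_inQ (hM : 1 ≤ M) (hh : 0 < h) (hx : inQ M X0 XM x) {i : ℕ} (hi : i ≤ M) :
    0 < DtOp M h x i := by
  have hstep := hx.2.2
  unfold DtOp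
  split_ifs with hi0 hiM
  · exact div_pos (sub_pos.2 (hstep 1 le_rfl hM)) hh
  · exact div_pos (sub_pos.2 (hstep M hM le_rfl)) hh
  · have hlt : x (i - 1) < x (i + 1) :=
      (hstep i (by omega) hi).trans (by simpa using hstep (i + 1) (by omega) (by omega))
    exact div_pos (sub_pos.2 hlt) (by positivity)

theorem cCoef_pos_of_inQ (hM : 1 ≤ M) (hh : 0 < h) {f : ℝ → ℝ} (hf : ∀ s : ℝ, 0 < s → 0 < f s)
    {u0 : ℕ → ℝ} (hx : inQ M X0 XM x) {i : ℕ} (hi : i ≤ M) (hu : 0 < u0 i) :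
    0 < cCoef M h f u0 x i := by
  have hD := DtOp_pos_of_inQ hM hh hx hi
  exact div_pos (by positivity) (mul_pos hD (hf _ (div_pos hu hD)))

end inQ

section Jfun

open Set

variable {M : ℕ} {X0 XM h τ : ℝ} {H f Vc Ve Wc We : ℝ → ℝ} {u0 u0half xn : ℕ → ℝ}

theorem convexOn_entropy (hh : 0 < h) (hH : ConvexOn ℝ (Ioi 0) H)
    (hu : ∀ i, 1 ≤ i → i ≤ M → 0 < u0half i) :
    ConvexOn ℝ {l | inQ M X0 XM l}
      (fun z => h * ∑ i ∈ Icc 1 M, H (u0half i / DhOp h z i) * DhOp h z i) := by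
  refine (convexOn_finsetSum (convex_inQ M X0 XM) _ fun i hi => ?_).smul hh.le
  obtain ⟨hi1, hiM⟩ := mem_Icc.1 hi
  exact ((hH.perspective_const (hu i hi1 hiM)).comp_linearMap (DhOpLinear h i)).subset
    (fun z hz => DhOp_pos_of_inQ hh hz hi1 hiM) (convex_inQ M X0 XM)

theorem convexOn_potential {V : ℝ → ℝ} (hh : 0 ≤ h) (hu : ∀ i ≤ M, 0 ≤ u0 i)
    (hV : ConvexOn ℝ univ V) : ConvexOn ℝ univ (fun z : ℕ → ℝ => ipE M h u0 (fun i => V (z i))) :=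
  convexOn_ipE hh hu fun i _ => hV.comp_linearMap (LinearMap.proj i : (ℕ → ℝ) →ₗ[ℝ] ℝ)

theorem convexOn_Shat {W : ℝ → ℝ} (hh : 0 ≤ h) (hu : ∀ i ≤ M, 0 ≤ u0 i)
    (hW : ConvexOn ℝ univ W) (i : ℕ) : ConvexOn ℝ univ (fun z => Shat M h W u0 z i) := by
  simp only [Shat, ipE_comm _ u0]
  exact convexOn_ipE hh hu fun j _ =>
    (hW.comp_linearMap (LinearMap.proj (R := ℝ) (φ := fun _ : ℕ => ℝ) i - LinearMap.proj j) :)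

theorem convexOn_interaction {W : ℝ → ℝ} (hh : 0 ≤ h) (hu : ∀ i ≤ M, 0 ≤ u0 i)
    (hW : ConvexOn ℝ univ W) :
    ConvexOn ℝ univ (fun z => ipE M h u0 (fun i => Shat M h W u0 z i)) :=
  convexOn_ipE hh hu fun i _ => convexOn_Shat hh hu hW i

theorem convexOn_Jfun_sub_quadratic (hh : 0 < h) (hH : ConvexOn ℝ (Ioi 0) H)
    (hVc : ConvexOn ℝ univ Vc) (hWc : ConvexOn ℝ univ Wc) (hu0 : ∀ i ≤ M, 0 ≤ u0 i)
    (hu0half : ∀ i, 1 ≤ i → i ≤ M → 0 < u0half i) :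
    ConvexOn ℝ {l | inQ M X0 XM l} (fun z => Jfun M h τ H f Vc Ve Wc We u0 u0half xn z
      - 1 / (2 * τ)
        * ipE M h (fun i => cCoef M h f u0 xn i * (z i - xn i)) (fun i => z i - xn i)) := by
  have hQ := convex_inQ M X0 XM
  have hsum := ((((convexOn_entropy hh hH hu0half).add
    ((convexOn_potential hh.le hu0 hVc).subset (subset_univ _) hQ)).add
    (((convexOn_interaction hh.le hu0 hWc).smul (by norm_num : (0 : ℝ) ≤ 1 / 2)).subset
      (subset_univ _) hQ)).sub (concaveOn_ipE_right (M := M) (h := h) hQ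
        (fun i => u0 i * deriv Ve (xn i)))).sub (concaveOn_ipE_right (M := M) (h := h) hQ
        (fun i => u0 i * Shat M h (deriv We) u0 xn i))
  refine hsum.congr fun z _ => ?_
  simp only [Jfun, Pi.add_apply, Pi.sub_apply, smul_eq_mul]
  ring

theorem Jfun_convexComb_add_le (hh : 0 < h) (hH : ConvexOn ℝ (Ioi 0) H)
    (hVc : ConvexOn ℝ univ Vc) (hWc : ConvexOn ℝ univ Wc) (hu0 : ∀ i ≤ M, 0 ≤ u0 i)
    (hu0half : ∀ i, 1 ≤ i → i ≤ M → 0 < u0half i) {z w : ℕ → ℝ} (hz : inQ M X0 XM z)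
    (hw : inQ M X0 XM w) {θ : ℝ} (hθ0 : 0 ≤ θ) (hθ1 : θ ≤ 1) :
    Jfun M h τ H f Vc Ve Wc We u0 u0half xn (fun i => θ * z i + (1 - θ) * w i)
      + θ * (1 - θ) * (1 / (2 * τ)
        * ipE M h (fun i => cCoef M h f u0 xn i * (z i - w i)) (fun i => z i - w i))
      ≤ θ * Jfun M h τ H f Vc Ve Wc We u0 u0half xn z
        + (1 - θ) * Jfun M h τ H f Vc Ve Wc We u0 u0half xn w := by
  have hgap := (convexOn_Jfun_sub_quadratic (X0 := X0) (XM := XM) (τ := τ) (f := f) (Ve := Ve)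
    (We := We) (xn := xn) hh hH hVc hWc hu0 hu0half).2 hz hw hθ0 (sub_nonneg.2 hθ1)
    (add_sub_cancel θ 1)
  rw [show θ • z + (1 - θ) • w = fun i => θ * z i + (1 - θ) * w i from rfl] at hgap
  have hquad := ipE_weighted_sq_convexComb (M := M) (h := h) (cCoef M h f u0 xn) xn z w θ
  simp only [smul_eq_mul] at hgap
  linear_combination hgap + 1 / (2 * τ) * hquad

end Jfun

theorem Jfun_convex_strictConvex_general
    (M : ℕ) (hM : 2 ≤ M) (X0 XM : ℝ) (hX : X0 < XM)
    (h : ℝ) (hh : h = (XM - X0) / (M : ℝ)) (τ : ℝ) (hτ : 0 < τ)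
    (H f Vc Ve Wc We : ℝ → ℝ)
    (hHconv : ConvexOn ℝ (Set.Ioi 0) H)
    (hf : ∀ s : ℝ, 0 < s → 0 < f s)
    (hVcconv : ConvexOn ℝ Set.univ Vc)
    (hWcconv : ConvexOn ℝ Set.univ Wc)
    (u0 u0half : ℕ → ℝ)
    (hu0 : ∀ i ≤ M, 0 < u0 i)
    (hu0half : ∀ i, 1 ≤ i → i ≤ M → 0 < u0half i)
    (xn : ℕ → ℝ) (hxn : inQ M X0 XM xn) :
    ConvexOn ℝ {l : ℕ → ℝ | inQ M X0 XM l} (Jfun M h τ H f Vc Ve Wc We u0 u0half xn)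
    ∧ ∀ z w : ℕ → ℝ, inQ M X0 XM z → inQ M X0 XM w → (∃ i ≤ M, z i ≠ w i) →
        ∀ θ : ℝ, 0 < θ → θ < 1 →
          Jfun M h τ H f Vc Ve Wc We u0 u0half xn (fun i => θ * z i + (1 - θ) * w i)
            < θ * Jfun M h τ H f Vc Ve Wc We u0 u0half xn z
              + (1 - θ) * Jfun M h τ H f Vc Ve Wc We u0 u0half xn w := by
  have hh0 : 0 < h := hh ▸ div_pos (sub_pos.2 hX) (by positivity)
  have hc : ∀ i ≤ M, 0 < cCoef M h f u0 xn i := fun i hi =>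
    cCoef_pos_of_inQ (by omega) hh0 hf hxn hi (hu0 i hi)
  have hu0' : ∀ i ≤ M, 0 ≤ u0 i := fun i hi => (hu0 i hi).le
  have hτ' : 0 < 1 / (2 * τ) := by positivity
  refine ⟨⟨convex_inQ M X0 XM, fun z hz w hw a b ha hb hab => ?_⟩,
    fun z w hz hw ⟨i, hiM, hne⟩ θ hθ0 hθ1 => ?_⟩
  · obtain rfl : b = 1 - a := by linarith
    have hquad := ipE_weighted_sq_nonneg hh0.le (fun i hi => (hc i hi).le) (fun i => z i - w i)
    exact (le_add_of_nonneg_right (by positivity)).trans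
      (Jfun_convexComb_add_le hh0 hHconv hVcconv hWcconv hu0' hu0half hz hw ha (sub_nonneg.1 hb))
  · have hquad := ipE_weighted_sq_pos hh0 hc (mem_Ioo_of_inQ_of_ne hz hw hiM hne)
      (d := fun i => z i - w i) (sub_ne_zero.2 hne)
    exact (lt_add_of_pos_right _ (by positivity)).trans_le
      (Jfun_convexComb_add_le hh0 hHconv hVcconv hWcconv hu0' hu0half hz hw hθ0.le hθ1.le)

/-- The functional `J` is convex on `Q` and strictly convex on `Q`
(strictness with respect to the components `0, …, M`). -/
theorem Jfun_convex_strictConvex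
    (M : ℕ) (hM : 2 ≤ M) (X0 XM : ℝ) (hX : X0 < XM)
    (h : ℝ) (hh : h = (XM - X0) / (M : ℝ)) (τ : ℝ) (hτ : 0 < τ)
    (H f Vc Ve Wc We : ℝ → ℝ)
    (hHconv : ConvexOn ℝ (Set.Ioi 0) H) (hHreg : ContDiffOn ℝ 1 H (Set.Ioi 0))
    (hf : ∀ s : ℝ, 0 < s → 0 < f s)
    (hVcconv : ConvexOn ℝ Set.univ Vc) (hVcreg : ContDiff ℝ 1 Vc)
    (hVeconv : ConvexOn ℝ Set.univ Ve) (hVereg : ContDiff ℝ 1 Ve)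
    (hWcconv : ConvexOn ℝ Set.univ Wc) (hWcreg : ContDiff ℝ 1 Wc)
    (hWeconv : ConvexOn ℝ Set.univ We) (hWereg : ContDiff ℝ 1 We)
    (hWceven : ∀ s : ℝ, Wc (-s) = Wc s) (hWeeven : ∀ s : ℝ, We (-s) = We s)
    (u0 u0half : ℕ → ℝ)
    (hu0 : ∀ i ≤ M, 0 < u0 i)
    (hu0half : ∀ i, 1 ≤ i → i ≤ M → 0 < u0half i)
    (xn : ℕ → ℝ) (hxn : inQ M X0 XM xn) :
    ConvexOn ℝ {l : ℕ → ℝ | inQ M X0 XM l} (Jfun M h τ H f Vc Ve Wc We u0 u0half xn)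
    ∧ ∀ z w : ℕ → ℝ, inQ M X0 XM z → inQ M X0 XM w → (∃ i ≤ M, z i ≠ w i) →
        ∀ θ : ℝ, 0 < θ → θ < 1 →
          Jfun M h τ H f Vc Ve Wc We u0 u0half xn (fun i => θ * z i + (1 - θ) * w i)
            < θ * Jfun M h τ H f Vc Ve Wc We u0 u0half xn z
              + (1 - θ) * Jfun M h τ H f Vc Ve Wc We u0 u0half xn w :=
  Jfun_convex_strictConvex_general M hM X0 XM hX h hh τ hτ H f Vc Ve Wc We hHconv hf hVcconv hWcconv
    u0 u0half hu0 hu0half xn hxn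
end
end
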